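/- arXiv:1802.05788 — 4 statements merged into one kernel-verified Lean document; each statement's English description precedes it below -/
import Mathlib

section
/- For 0 ≤ a ≤ ⌊n/2⌋ and a ≤ b ≤ n-a, the pointwise-product set G_n(a)·G_n(b) equals the union over i = 0,...,a of G_n(n-a-b+2i). -/
open Pointwise

/-- Hamming weight: number of entries equal to +1. -/
def wt {n : ℕ} (X : Fin n → ℤˣ) : ℕ := (Finset.univ.filter (fun i => X i = 1)).card

/-- The set of ±1 sequences of length `n` with exactly `k` entries equal to +1. -/
def G (n k : ℕ) : Set (Fin n → ℤˣ) := {X | wt X = k}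

/-- Cyclic shift by `k`: `(shift k X) i = X (i + k mod n)`. -/
def shift {n : ℕ} (k : ℕ) (X : Fin n → ℤˣ) : Fin n → ℤˣ :=
  fun i => X ⟨((i : ℕ) + k) % n, Nat.mod_lt _ i.pos⟩

/-- Reversal of a sequence. -/
def rev {n : ℕ} (X : Fin n → ℤˣ) : Fin n → ℤˣ := fun i => X i.rev

/-- Decimation by `r`: `(dec r X) i = X (r * i mod n)`. -/
def dec {n : ℕ} (r : ℕ) (X : Fin n → ℤˣ) : Fin n → ℤˣ :=
  fun i => X ⟨(r * (i : ℕ)) % n, Nat.mod_lt _ i.pos⟩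

/-- Periodic autocorrelation `P_X(k) = Σ_i x_i x_{i+k}`. -/
def P {n : ℕ} (X : Fin n → ℤˣ) (k : ℕ) : ℤ :=
  ∑ i : Fin n, ((X i : ℤ) * ((shift k X) i : ℤ))

/-- Periodic cross-correlation `P_{X,Y}(k) = Σ_i x_i y_{i+k}`. -/
def Pc {n : ℕ} (X Y : Fin n → ℤˣ) (k : ℕ) : ℤ :=
  ∑ i : Fin n, ((X i : ℤ) * ((shift k Y) i : ℤ))

/-!
Write `plusSet x` for the set of positions where `x` is `+1`. Since `u * v = 1` exactly when
`u = v` in `ℤˣ`, the `+1`-positions of `x * y` are those where `x` and `y` agree, i.e. the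
complement of `plusSet x ∆ plusSet y`; hence `ω(x y) + ω(x) + ω(y) = n + 2 |plusSet x ∩ plusSet y|`.
For `x ∈ G_n(a)`, `y ∈ G_n(b)` the overlap ranges over `0, …, a`. Conversely, `z ∈ G_n(n-a-b+2i)`
is `x · (x z)` for any `x` whose `+1`-set has `a` elements, exactly `i` of them inside `plusSet z`,
and then `x z ∈ G_n(b)` by the same identity.
-/

open Finset
open scoped symmDiff

lemma units_pi_mul_self {ι : Type*} (x : ι → ℤˣ) : x * x = 1 :=
  funext fun j => Int.units_mul_self (x j)

lemma Finset.card_symmDiff_add_two_mul_card_inter {α : Type*} [DecidableEq α] (s t : Finset α) :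
    #(s ∆ t) + 2 * #(s ∩ t) = #s + #t := by
  rw [symmDiff_eq_sup_sdiff_inf, card_sdiff_of_subset inf_le_sup]
  have := card_union_add_card_inter s t
  have := card_le_card (inf_le_sup : s ∩ t ≤ s ∪ t)
  simp only [sup_eq_union, inf_eq_inter] at *
  omega

variable {ι : Type*} [Fintype ι] [DecidableEq ι]

def plusSet (x : ι → ℤˣ) : Finset ι := {i | x i = 1}

lemma wt_eq_card_plusSet {n : ℕ} (x : Fin n → ℤˣ) : wt x = #(plusSet x) := rfl

lemma plusSet_mul (x y : ι → ℤˣ) : plusSet (x * y) = (plusSet x ∆ plusSet y)ᶜ := by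
  ext j
  simp only [plusSet, mem_filter, mem_univ, true_and, mem_compl, mem_symmDiff, Pi.mul_apply,
    mul_eq_one_iff_eq_inv, Int.units_inv_eq_self]
  rcases Int.units_eq_one_or (x j) with hx | hx <;>
    rcases Int.units_eq_one_or (y j) with hy | hy <;> simp [hx, hy]

lemma card_plusSet_mul_add (x y : ι → ℤˣ) :
    #(plusSet (x * y)) + #(plusSet x) + #(plusSet y) =
      Fintype.card ι + 2 * #(plusSet x ∩ plusSet y) := by
  have := card_symmDiff_add_two_mul_card_inter (plusSet x) (plusSet y)
  have := card_le_univ (plusSet x ∆ plusSet y)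
  rw [plusSet_mul, card_compl]
  omega

def ofPlusSet (D : Finset ι) : ι → ℤˣ := fun j => if j ∈ D then 1 else -1

lemma plusSet_ofPlusSet (D : Finset ι) : plusSet (ofPlusSet D) = D := by
  ext j
  by_cases hj : j ∈ D <;> simp [plusSet, ofPlusSet, hj]

lemma Finset.exists_card_eq_card_inter_eq {C : Finset ι} {a i : ℕ} (hia : i ≤ a)
    (hi : i ≤ #C) (hai : a - i ≤ #Cᶜ) : ∃ D : Finset ι, #D = a ∧ #(D ∩ C) = i := by
  obtain ⟨S, hSC, hS⟩ := exists_subset_card_eq hi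
  obtain ⟨T, hTC, hT⟩ := exists_subset_card_eq hai
  have hTC' : Disjoint T C := disjoint_of_subset_left hTC disjoint_compl_left
  refine ⟨S ∪ T, ?_, ?_⟩
  · rw [card_union_of_disjoint (disjoint_of_subset_left hSC hTC'.symm), hS, hT]
    omega
  · rw [union_inter_distrib_right, inter_eq_left.2 hSC, disjoint_iff_inter_eq_empty.1 hTC',
      union_empty, hS]

theorem stmt1_general (n a b : ℕ) (hab : a ≤ b) (hb : b ≤ n - a) :
    G n a * G n b = ⋃ i ∈ Finset.range (a + 1), G n (n - a - b + 2 * i) := by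
  have habn : a + b ≤ n := by omega
  ext z
  simp only [G, Set.mem_mul, Set.mem_iUnion, Set.mem_ofPred_eq, mem_range, wt_eq_card_plusSet]
  constructor
  · rintro ⟨x, hx, y, hy, rfl⟩
    have hwt := card_plusSet_mul_add x y
    have hk := card_le_card (inter_subset_left : plusSet x ∩ plusSet y ⊆ plusSet x)
    rw [Fintype.card_fin] at hwt
    exact ⟨#(plusSet x ∩ plusSet y), by omega, by omega⟩
  · rintro ⟨i, hi, hz⟩
    have hzc := card_compl (plusSet z)
    rw [Fintype.card_fin] at hzc
    obtain ⟨D, hD, hDz⟩ :=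
      exists_card_eq_card_inter_eq (C := plusSet z) (by omega : i ≤ a) (by omega) (by omega)
    have hwt := card_plusSet_mul_add (ofPlusSet D) z
    rw [plusSet_ofPlusSet, Fintype.card_fin] at hwt
    refine ⟨ofPlusSet D, ?_, ofPlusSet D * z, ?_, ?_⟩
    · rwa [plusSet_ofPlusSet]
    · show #(plusSet _) = b
      omega
    · rw [← mul_assoc, units_pi_mul_self, one_mul]

theorem stmt1 (n a b : ℕ) (ha : a ≤ n / 2) (hab : a ≤ b) (hb : b ≤ n - a) :
    G n a * G n b = ⋃ i ∈ Finset.range (a + 1), G n (n - a - b + 2 * i) :=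
  stmt1_general n a b hab hb
end

section
/- For ⌊n/2⌋+1 ≤ a ≤ n and n-a ≤ b ≤ a, the pointwise-product set G_n(a)·G_n(b) equals the union over i = 0,...,n-a of G_n(a+b-n+2i). -/
open Pointwise

lemma units_mul_eq_one_iff (u v : ℤˣ) : u * v = 1 ↔ u = v := by
  rcases Int.units_eq_one_or u with h|h <;> rcases Int.units_eq_one_or v with h'|h' <;>
    simp [h, h']

lemma wt_le {n : ℕ} (X : Fin n → ℤˣ) : wt X ≤ n := by
  simpa [wt] using (Finset.card_filter_le Finset.univ _).trans_eq (by simp)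

lemma wt_mul_eq {n : ℕ} (X Y : Fin n → ℤˣ) :
    wt (X * Y) = ((Finset.univ.filter (fun j => X j = 1)) ∩
        (Finset.univ.filter (fun j => Y j = 1))).card +
      (n - ((Finset.univ.filter (fun j => X j = 1)) ∪
        (Finset.univ.filter (fun j => Y j = 1))).card) := by
  set A := Finset.univ.filter (fun j => X j = 1) with hA
  set B := Finset.univ.filter (fun j => Y j = 1) with hB
  have hset : Finset.univ.filter (fun j => (X * Y) j = 1) = (A ∩ B) ∪ (A ∪ B)ᶜ := by
    ext j
    simp only [hA, hB, Finset.mem_filter, Finset.mem_inter, Finset.mem_union,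
      Finset.mem_compl, Finset.mem_univ, true_and, Pi.mul_apply, not_or]
    rcases Int.units_eq_one_or (X j) with h|h <;> rcases Int.units_eq_one_or (Y j) with h'|h' <;>
      simp [h, h']
  have hdisj : Disjoint (A ∩ B) (A ∪ B)ᶜ := by
    exact disjoint_compl_right.mono_left
      (Finset.inter_subset_left.trans Finset.subset_union_left)
  rw [wt, hset, Finset.card_union_of_disjoint hdisj, Finset.card_compl, Fintype.card_fin]

theorem stmt2 (n a b : ℕ) (ha1 : n / 2 + 1 ≤ a) (ha2 : a ≤ n) (hb1 : n - a ≤ b) (hb2 : b ≤ a) :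
    G n a * G n b = ⋃ i ∈ Finset.range (n - a + 1), G n (a + b - n + 2 * i) := by
  ext Z
  simp only [Set.mem_iUnion, Finset.mem_range]
  constructor
  · rintro ⟨X, hX, Y, hY, rfl⟩
    have hX' : wt X = a := hX
    have hY' : wt Y = b := hY
    set A := Finset.univ.filter (fun j => X j = 1) with hA
    set B := Finset.univ.filter (fun j => Y j = 1) with hB
    have h1 : (A ∩ B).card + (A ∪ B).card = A.card + B.card :=
      Finset.card_inter_add_card_union A B
    have h2 : (A ∪ B).card ≤ n := by
      simpa using (Finset.card_le_univ (A ∪ B)).trans_eq (by simp)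
    have h3 : (A ∩ B).card ≤ B.card := Finset.card_le_card Finset.inter_subset_right
    have h4 := wt_mul_eq X Y
    rw [← hA, ← hB] at h4
    have hAa : A.card = a := hX'
    have hBb : B.card = b := hY'
    refine ⟨(A ∩ B).card - (a + b - n), by omega, ?_⟩
    show wt (X * Y) = _
    omega
  · rintro ⟨i, hi, hZ⟩
    have hZ' : wt Z = a + b - n + 2 * i := hZ
    have hwn : wt Z ≤ n := wt_le Z
    set C := Finset.univ.filter (fun j => Z j = 1) with hC
    have hCc : C.card = wt Z := rfl
    have hCcompl : Cᶜ.card = n - C.card := by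
      rw [Finset.card_compl, Fintype.card_fin]
    obtain ⟨S, hSC, hScard⟩ : ∃ S ⊆ C, S.card = a + b - n + i :=
      Finset.exists_subset_card_eq (by omega)
    obtain ⟨T, hTC, hTcard⟩ : ∃ T ⊆ Cᶜ, T.card = a - (a + b - n + i) :=
      Finset.exists_subset_card_eq (by omega)
    set X : Fin n → ℤˣ := fun j => if j ∈ S ∪ T then 1 else -1 with hXdef
    have hST : Disjoint S T :=
      (disjoint_compl_right.mono_left hSC).mono_right hTC
    have hXfilter : Finset.univ.filter (fun j => X j = 1) = S ∪ T := by
      ext j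
      simp only [hXdef, Finset.mem_filter, Finset.mem_univ, true_and]
      split_ifs with h <;> simp [h]
    have hXwt : wt X = a := by
      rw [wt, hXfilter, Finset.card_union_of_disjoint hST, hScard, hTcard]
      omega
    refine ⟨X, hXwt, X * Z, ?_, ?_⟩
    · -- wt (X * Z) = b
      have hfilter : Finset.univ.filter (fun j => (X * Z) j = 1) = S ∪ (Cᶜ \ T) := by
        ext j
        simp only [Finset.mem_filter, Finset.mem_univ, true_and, Pi.mul_apply,
          units_mul_eq_one_iff, Finset.mem_union, Finset.mem_sdiff, Finset.mem_compl]
        by_cases hj : j ∈ S ∪ T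
        · rcases Finset.mem_union.mp hj with hjS | hjT
          · have hjC : Z j = 1 := (Finset.mem_filter.mp (hSC hjS)).2
            simp [hXdef, hj, hjC, hjS]
          · have hjC : j ∉ C := Finset.mem_compl.mp (hTC hjT)
            have hZj : Z j ≠ 1 := fun h => hjC (by simp [hC, h])
            rcases Int.units_eq_one_or (Z j) with h|h
            · exact absurd h hZj
            · have : j ∉ S := fun hS => (Finset.disjoint_left.mp hST hS) hjT
              simp [hXdef, hj, h, this, hjT, hjC]
        · have hjS : j ∉ S := fun h => hj (Finset.mem_union_left _ h)
          have hjT : j ∉ T := fun h => hj (Finset.mem_union_right _ h)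
          rcases Int.units_eq_one_or (Z j) with h|h
          · have hjC : j ∈ C := by simp [hC, h]
            simp [hXdef, hj, h, hjS, hjT, hjC]
          · have hjC : j ∉ C := by simp [hC, h]
            simp [hXdef, hj, h, hjS, hjT, hjC]
      have hdisj2 : Disjoint S (Cᶜ \ T) := by
        exact (disjoint_compl_right.mono_left hSC).mono_right Finset.sdiff_subset
      show wt (X * Z) = b
      rw [wt, hfilter, Finset.card_union_of_disjoint hdisj2,
        Finset.card_sdiff_of_subset hTC, hScard, hTcard, hCcompl, hCc, hZ']
      omega
    · funext j
      simp [Pi.mul_apply, ← mul_assoc, Int.units_mul_self]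
end

section
/- If X ∈ Z_2^n satisfies R(X) = X (X is symmetric) and r is coprime to n with inverse r^{-1} mod n, then R(δ_r X) = C^{1-r^{-1}}(δ_r X); in particular the C-orbit of δ_r(X) contains a symmetric sequence. Hence the set of C-orbits containing a symmetric sequence is invariant under decimation. -/
open Pointwise

lemma fin_eq_of_cast {n : ℕ} (i j : Fin n)
    (h : ((i : ℕ) : ZMod n) = ((j : ℕ) : ZMod n)) : i = j := by
  have : NeZero n := ⟨i.pos.ne'⟩
  have h1 := ZMod.val_cast_of_lt i.isLt
  have h2 := ZMod.val_cast_of_lt j.isLt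
  exact Fin.ext (by rw [← h1, ← h2, h])

lemma cast_n_sub {n a : ℕ} (h : a ≤ n) : ((n - a : ℕ) : ZMod n) = -(a : ZMod n) := by
  apply eq_neg_of_add_eq_zero_left
  rw [← Nat.cast_add, Nat.sub_add_cancel h, ZMod.natCast_self]

lemma cast_rev {n : ℕ} (i : Fin n) : ((i.rev : ℕ) : ZMod n) = -((i : ℕ) : ZMod n) - 1 := by
  rw [Fin.val_rev, cast_n_sub (by omega)]
  push_cast; ring

lemma shift_sym {n : ℕ} (hn : 0 < n) (Y : Fin n → ℤˣ) (t k : ℕ)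
    (h : rev Y = shift t Y) (h2k : ((2 * k : ℕ) : ZMod n) = ((t : ℕ) : ZMod n)) :
    rev (shift k Y) = shift k Y := by
  have h2k' : 2 * (k : ZMod n) = (t : ZMod n) := by push_cast at h2k; exact h2k
  funext i
  simp only [rev, shift]
  set j : Fin n := ⟨((i : ℕ) + (n - k % n)) % n, Nat.mod_lt _ hn⟩ with hj
  have hjc : ((j : ℕ) : ZMod n) = ((i : ℕ) : ZMod n) - k := by
    rw [hj]; simp only
    rw [ZMod.natCast_mod, Nat.cast_add, cast_n_sub (le_of_lt (Nat.mod_lt _ hn)),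
      ZMod.natCast_mod]; ring
  have key := congrFun h j
  simp only [rev, shift] at key
  have e1 : (⟨((i.rev : ℕ) + k) % n, Nat.mod_lt _ hn⟩ : Fin n) = j.rev :=
    fin_eq_of_cast _ _ (by
      rw [ZMod.natCast_mod, Nat.cast_add, cast_rev, cast_rev, hjc]; ring)
  have e2 : (⟨((j : ℕ) + t) % n, Nat.mod_lt _ hn⟩ : Fin n)
      = ⟨((i : ℕ) + k) % n, Nat.mod_lt _ hn⟩ :=
    fin_eq_of_cast _ _ (by
      rw [ZMod.natCast_mod, ZMod.natCast_mod, Nat.cast_add, Nat.cast_add, hjc]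
      linear_combination -h2k')
  exact (congrArg Y e1).trans (key.trans (congrArg Y e2))

lemma rev_dec {n r s : ℕ} (hn : 0 < n) (hs : (r * s) % n = 1 % n)
    (X : Fin n → ℤˣ) (hX : rev X = X) :
    rev (dec r X) = shift ((1 + (n - s % n)) % n) (dec r X) := by
  have hrs : (r : ZMod n) * s = 1 := by
    have := congrArg (fun a : ℕ => (a : ZMod n)) hs
    simpa only [ZMod.natCast_mod, Nat.cast_mul, Nat.cast_one] using this
  have ht : (((1 + (n - s % n)) % n : ℕ) : ZMod n) = 1 - (s : ZMod n) := by
    rw [ZMod.natCast_mod, Nat.cast_add, Nat.cast_one,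
      cast_n_sub (Nat.mod_lt s hn).le, ZMod.natCast_mod]
    ring
  funext i
  simp only [rev, dec, shift]
  set j : Fin n := ⟨r * (i.rev : ℕ) % n, Nat.mod_lt _ hn⟩ with hj
  have hXj : X j.rev = X j := congrFun hX j
  have hjc : ((j : ℕ) : ZMod n) = (r : ZMod n) * (-((i : ℕ) : ZMod n) - 1) := by
    rw [hj]; simp only
    rw [ZMod.natCast_mod, Nat.cast_mul, cast_rev]
  have e2 : j.rev = (⟨r * (((i : ℕ) + (1 + (n - s % n)) % n) % n) % n, Nat.mod_lt _ hn⟩ : Fin n) :=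
    fin_eq_of_cast _ _ (by
      rw [cast_rev, hjc, ZMod.natCast_mod, Nat.cast_mul, ZMod.natCast_mod,
        Nat.cast_add, ht]
      linear_combination hrs)
  exact hXj.symm.trans (congrArg X e2)

lemma exists_halving {n r s : ℕ} (hn : 0 < n) (hs : (r * s) % n = 1 % n) :
    ∃ k, k < n ∧ ((2 * k : ℕ) : ZMod n) = (((1 + (n - s % n)) % n : ℕ) : ZMod n) := by
  set t := (1 + (n - s % n)) % n with htd
  have htn : t < n := Nat.mod_lt _ hn
  rcases Nat.even_or_odd t with he | ho
  · exact ⟨t / 2, lt_of_le_of_lt (Nat.div_le_self _ _) htn,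
      by rw [Nat.mul_div_cancel' he.two_dvd]⟩
  · have hot : t % 2 = 1 := Nat.odd_iff.mp ho
    have hnodd : n % 2 = 1 := by
      by_contra hne
      have en : n % 2 = 0 := by omega
      have hn2 : n ≠ 1 := by omega
      have h1 : (r * s) % n = 1 := by rwa [Nat.one_mod_eq_one.mpr hn2] at hs
      have hd1 := Nat.div_add_mod (r * s) n
      have ha : (n * (r * s / n)) % 2 = 0 := Nat.even_iff.mp
        ((Nat.even_iff.mpr en).mul_right _)
      have hrs2 : (r * s) % 2 = 1 := by omega
      have hs2 : s % 2 = 1 := by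
        rcases Nat.even_or_odd s with hes | hos
        · have : (r * s) % 2 = 0 := Nat.even_iff.mp (hes.mul_left _)
          omega
        · exact Nat.odd_iff.mp hos
      have hd2 := Nat.div_add_mod s n
      have hb : (n * (s / n)) % 2 = 0 := Nat.even_iff.mp
        ((Nat.even_iff.mpr en).mul_right _)
      have hsn2 : (s % n) % 2 = 1 := by omega
      have hsnlt : s % n < n := Nat.mod_lt _ hn
      have hu2 : (1 + (n - s % n)) % 2 = 0 := by omega
      have hc : (n * ((1 + (n - s % n)) / n)) % 2 = 0 := Nat.even_iff.mp
        ((Nat.even_iff.mpr en).mul_right _)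
      have h5 : n * ((1 + (n - s % n)) / n) + t = 1 + (n - s % n) := by
        rw [htd]; exact Nat.div_add_mod _ n
      omega
    refine ⟨(t + n) / 2, ?_, ?_⟩
    · omega
    · have hev : 2 * ((t + n) / 2) = t + n := by
        have := Nat.odd_iff.mp ho
        omega
      rw [hev, Nat.cast_add, ZMod.natCast_self, add_zero]

theorem stmt12 (n r s : ℕ) (hn : 0 < n) (hr : Nat.Coprime r n)
    (hs : (r * s) % n = 1 % n) (X : Fin n → ℤˣ) (hX : rev X = X) :
    rev (dec r X) = shift ((1 + (n - s % n)) % n) (dec r X) ∧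
    ∃ k, k < n ∧ rev (shift k (dec r X)) = shift k (dec r X) := by
  refine ⟨rev_dec hn hs X hX, ?_⟩
  obtain ⟨k, hk, h2k⟩ := exists_halving hn hs
  exact ⟨k, hk, shift_sym hn (dec r X) _ k (rev_dec hn hs X hX) h2k⟩
end

section
/- Let n, r ≥ 1 with nr odd, and let X = (A, R(A)) ∈ Z_2^{4n} be a symmetric concatenation where A ∈ Z_2^{2n}. Then X is not the first row of a circulant Hadamard matrix; i.e., P_X(k) ≠ 0 for some 0 < k < 4n. (Equivalently, P_X(2n) ≠ 0.) -/
open Pointwise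

lemma unit_mod_two (u v : ℤˣ) : ((u : ℤ) * (v : ℤ)) % 2 = 1 := by
  rcases Int.units_eq_one_or u with h | h <;>
  rcases Int.units_eq_one_or v with h' | h' <;> simp [h, h']

theorem stmt18 (n r : ℕ) (hn : 1 ≤ n) (hr : 1 ≤ r) (hodd : Odd (n * r))
    (A : Fin (2 * n) → ℤˣ) :
    P (Fin.append A (rev A)) (2 * n) ≠ 0 ∧
    ∃ k, 0 < k ∧ k < 2 * n + 2 * n ∧ P (Fin.append A (rev A)) k ≠ 0 := by
  obtain ⟨hno, -⟩ := Nat.odd_mul.mp hodd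
  have hle : n ≤ 2 * n := by omega
  set X : Fin (2 * n + 2 * n) → ℤˣ := Fin.append A (rev A) with hXdef
  set h : Fin (2 * n) → ℤ := fun i => (A i : ℤ) * (A i.rev : ℤ) with hh
  set S : ℤ := ∑ i : Fin (2 * n), h i with hS
  set T : ℤ := ∑ k : Fin n, h (Fin.castLE hle k) with hT
  -- shift computations
  have hsh1 : ∀ i : Fin (2 * n), shift (2 * n) X (Fin.castAdd (2 * n) i) = A i.rev := by
    intro i
    have heq : (⟨(((Fin.castAdd (2 * n) i) : ℕ) + 2 * n) % (2 * n + 2 * n),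
        Nat.mod_lt _ (Fin.castAdd (2 * n) i).pos⟩ : Fin (2 * n + 2 * n)) = Fin.natAdd (2 * n) i := by
      apply Fin.ext
      simp only [Fin.coe_castAdd, Fin.coe_natAdd]
      rw [Nat.mod_eq_of_lt (by omega)]
      omega
    show X _ = _
    rw [heq, hXdef, Fin.append_right]
    rfl
  have hsh2 : ∀ i : Fin (2 * n), shift (2 * n) X (Fin.natAdd (2 * n) i) = A i := by
    intro i
    have heq : (⟨(((Fin.natAdd (2 * n) i) : ℕ) + 2 * n) % (2 * n + 2 * n),
        Nat.mod_lt _ (Fin.natAdd (2 * n) i).pos⟩ : Fin (2 * n + 2 * n)) = Fin.castAdd (2 * n) i := by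
      apply Fin.ext
      simp only [Fin.coe_castAdd, Fin.coe_natAdd]
      have h4 : 2 * n + (i : ℕ) + (2 * n) = (i : ℕ) + (2 * n + 2 * n) := by omega
      rw [h4, Nat.add_mod_right]
      exact Nat.mod_eq_of_lt (by omega)
    show X _ = _
    rw [heq, hXdef, Fin.append_left]
  have hPS : P X (2 * n) = 2 * S := by
    rw [P, Fin.sum_univ_add]
    have e1 : ∀ i : Fin (2 * n),
        (X (Fin.castAdd (2 * n) i) : ℤ) * ((shift (2 * n) X) (Fin.castAdd (2 * n) i) : ℤ) = h i := by
      intro i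
      rw [hsh1 i, hXdef, Fin.append_left]
    have e2 : ∀ i : Fin (2 * n),
        (X (Fin.natAdd (2 * n) i) : ℤ) * ((shift (2 * n) X) (Fin.natAdd (2 * n) i) : ℤ) = h i := by
      intro i
      rw [hsh2 i, hXdef, Fin.append_right]
      show ((A i.rev : ℤ)) * (A i : ℤ) = _
      rw [hh, mul_comm]
    rw [Finset.sum_congr rfl (fun i _ => e1 i), Finset.sum_congr rfl (fun i _ => e2 i)]
    ring
  -- S = 2 * T
  have hrevh : ∀ i : Fin (2 * n), h i.rev = h i := by
    intro i
    simp only [hh, Fin.rev_rev]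
    ring
  have hST : S = 2 * T := by
    have hsplit : S = ∑ i ∈ Finset.univ.filter (fun i : Fin (2 * n) => (i : ℕ) < n), h i
        + ∑ i ∈ Finset.univ.filter (fun i : Fin (2 * n) => ¬ (i : ℕ) < n), h i :=
      (Finset.sum_filter_add_sum_filter_not _ _ _).symm
    have h2 : ∑ i ∈ Finset.univ.filter (fun i : Fin (2 * n) => ¬ (i : ℕ) < n), h i
        = ∑ i ∈ Finset.univ.filter (fun i : Fin (2 * n) => (i : ℕ) < n), h i := by
      refine Finset.sum_nbij' (fun i => i.rev) (fun i => i.rev) ?_ ?_ ?_ ?_ ?_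
      · intro a ha
        simp only [Finset.mem_filter, Finset.mem_univ, true_and, not_lt] at ha ⊢
        simp only [Fin.val_rev]
        omega
      · intro a ha
        simp only [Finset.mem_filter, Finset.mem_univ, true_and, not_lt] at ha ⊢
        have := a.isLt
        simp only [Fin.val_rev]
        omega
      · intro a _; exact Fin.rev_rev a
      · intro a _; exact Fin.rev_rev a
      · intro a _; exact (hrevh a).symm
    have h3 : ∑ i ∈ Finset.univ.filter (fun i : Fin (2 * n) => (i : ℕ) < n), h i = T := by
      refine Finset.sum_nbij' (fun i : Fin (2 * n) => (⟨(i : ℕ) % n, Nat.mod_lt _ hn⟩ : Fin n))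
        (fun k : Fin n => Fin.castLE hle k) ?_ ?_ ?_ ?_ ?_
      · intro a _; exact Finset.mem_univ _
      · intro a _
        simp only [Finset.mem_filter, Finset.mem_univ, true_and]
        exact a.isLt
      · intro a ha
        simp only [Finset.mem_filter, Finset.mem_univ, true_and] at ha
        apply Fin.ext
        simp [Nat.mod_eq_of_lt ha]
      · intro a _
        apply Fin.ext
        simp [Nat.mod_eq_of_lt a.isLt]
      · intro a ha
        simp only [Finset.mem_filter, Finset.mem_univ, true_and] at ha
        congr 1
        apply Fin.ext
        simp [Nat.mod_eq_of_lt ha]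
    rw [hsplit, h2, h3]
    ring
  have hTodd : Odd T := by
    rw [Int.odd_iff]
    rw [hT, Finset.sum_int_mod]
    have : ∀ k : Fin n, h (Fin.castLE hle k) % 2 = 1 := fun k => unit_mod_two _ _
    rw [Finset.sum_congr rfl (fun k _ => this k)]
    simp only [Finset.sum_const, Finset.card_univ, Fintype.card_fin, nsmul_eq_mul, mul_one]
    rw [Int.odd_iff.mp (by exact_mod_cast hno.natCast)]
  have hTne : T ≠ 0 := by
    rintro h0
    rw [h0] at hTodd
    exact (Int.not_odd_iff_even.mpr Even.zero) hTodd
  have hPne : P X (2 * n) ≠ 0 := by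
    rw [hPS, hST]
    intro h0
    have : T = 0 := by linarith
    exact hTne this
  exact ⟨hPne, ⟨2 * n, by omega, by omega, hPne⟩⟩
end
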